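/- Let M = {n ∈ ℕ+ : val_2(n) is even and val_3(n) is even}. Then M has natural density 1/2, the set 6M has natural density 1/12, and the disjoint union M ∪ 6M has natural density 7/12. -/

import Mathlib

/-- `S ⊆ ℕ+` has natural (asymptotic) density `c`:
`#{s ∈ S : 1 ≤ s ≤ N} / N → c` as `N → ∞`. -/
def hasDensity (S : Set ℕ) (c : ℝ) : Prop :=
  Filter.Tendsto (fun N : ℕ => ((S ∩ Set.Icc 1 N).ncard : ℝ) / N)
    Filter.atTop (nhds c)

/-- The set `M = {n ∈ ℕ+ : val₂(n) and val₃(n) both even}`. -/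
def M3 : Set ℕ := {n | 0 < n ∧ Even (padicValNat 2 n) ∧ Even (padicValNat 3 n)}

open Finset Filter

section Aux

instance : Fact (Nat.Prime 2) := ⟨Nat.prime_two⟩
instance : Fact (Nat.Prime 3) := ⟨Nat.prime_three⟩

/-- Count of `m ∈ [1,x]` coprime to 6. -/
noncomputable def Cnt (x : ℕ) : ℕ :=
  ((Finset.Icc 1 x).filter (fun m => Nat.Coprime m 6)).card

open Classical in
/-- Count of `n ∈ [1,N]` lying in `M3`. -/
noncomputable def Acnt (N : ℕ) : ℕ := ((Finset.Icc 1 N).filter (fun n => n ∈ M3)).card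

lemma coprime6_iff (m : ℕ) : Nat.Coprime m 6 ↔ m % 6 = 1 ∨ m % 6 = 5 := by
  rw [Nat.Coprime, Nat.gcd_comm, Nat.gcd_rec]
  have h : m % 6 < 6 := Nat.mod_lt _ (by norm_num)
  interval_cases h : m % 6 <;> simp

lemma coprime6_iff' (m : ℕ) : Nat.Coprime m 6 ↔ ¬ 2 ∣ m ∧ ¬ 3 ∣ m := by
  rw [coprime6_iff]; omega

lemma Cnt_succ (x : ℕ) :
    Cnt (x+1) = Cnt x + (if Nat.Coprime (x+1) 6 then 1 else 0) := by
  unfold Cnt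
  have hins : Finset.Icc 1 (x+1) = insert (x+1) (Finset.Icc 1 x) := by
    ext a; simp [Finset.mem_Icc, Finset.mem_insert]; omega
  rw [hins, Finset.filter_insert]
  by_cases h : Nat.Coprime (x+1) 6
  · rw [if_pos h, if_pos h, Finset.card_insert_of_notMem (by simp [Finset.mem_Icc])]
  · rw [if_neg h, if_neg h, Nat.add_zero]

lemma Cnt_formula (x : ℕ) : Cnt x = (x+5)/6 + (x+1)/6 := by
  induction x with
  | zero => simp [Cnt]
  | succ n ih =>
    rw [Cnt_succ, ih]
    have h1 : (n+1+5)/6 = (n+5)/6 + if 6 ∣ (n+6) then 1 else 0 := by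
      have := Nat.succ_div (a := n+5) (b := 6); simpa [show n+5+1 = n+6 by omega] using this
    have h2 : (n+1+1)/6 = (n+1)/6 + if 6 ∣ (n+2) then 1 else 0 := by
      have := Nat.succ_div (a := n+1) (b := 6); simpa [show n+1+1 = n+2 by omega] using this
    have hc : Nat.Coprime (n+1) 6 ↔ (n+1) % 6 = 1 ∨ (n+1) % 6 = 5 := coprime6_iff _
    rw [h1, h2]; simp only [hc]
    split_ifs <;> omega

lemma Cnt_bounds (x : ℕ) : 2*x ≤ 6 * Cnt x + 4 ∧ 6 * Cnt x ≤ 2*x + 6 := by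
  rw [Cnt_formula]
  omega

lemma Cnt_zero : Cnt 0 = 0 := by simp [Cnt]

lemma val2_form (a b m : ℕ) (h2 : ¬ 2 ∣ m) (h3 : ¬ 3 ∣ m) (hm : 0 < m) :
    padicValNat 2 (4^a*9^b*m) = 2*a ∧ padicValNat 3 (4^a*9^b*m) = 2*b := by
  have h4 : (4:ℕ)^a = 2^(2*a) := by rw [pow_mul]; norm_num
  have h9 : (9:ℕ)^b = 3^(2*b) := by rw [pow_mul]; norm_num
  have hne : (4:ℕ)^a*9^b ≠ 0 := by positivity
  have hmne : m ≠ 0 := hm.ne'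
  constructor
  · rw [padicValNat.mul hne hmne, padicValNat.mul (by positivity) (by positivity),
      padicValNat.eq_zero_of_not_dvd h2, h4, padicValNat.prime_pow,
      padicValNat.eq_zero_of_not_dvd (by
        intro h; exact absurd ((Nat.prime_two.dvd_of_dvd_pow h)) (by norm_num))]
    omega
  · rw [padicValNat.mul hne hmne, padicValNat.mul (by positivity) (by positivity),
      padicValNat.eq_zero_of_not_dvd h3, h9, padicValNat.prime_pow,
      padicValNat.eq_zero_of_not_dvd (by
        intro h; exact absurd ((Nat.prime_three.dvd_of_dvd_pow h)) (by norm_num))]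
    omega

open Classical in
lemma fiber_card (N : ℕ) (p : ℕ × ℕ) :
    ((((Finset.Icc 1 N).filter (fun n => n ∈ M3)).filter
      (fun n => (padicValNat 2 n / 2, padicValNat 3 n / 2) = p)).card : ℕ)
      = Cnt (N / (4^p.1 * 9^p.2)) := by
  obtain ⟨a, b⟩ := p
  have dpos : 0 < 4^a*9^b := by positivity
  rw [Cnt]
  refine Finset.card_bij' (fun n _ => n / (4^a*9^b)) (fun m _ => 4^a*9^b*m) ?_ ?_ ?_ ?_
  · -- forward maps into target
    intro n hn
    simp only [Finset.mem_filter, Finset.mem_Icc, Prod.mk.injEq] at hn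
    obtain ⟨⟨⟨hn1, hnN⟩, hnM⟩, ha, hb⟩ := hn
    obtain ⟨hn0, hv2, hv3⟩ := hnM
    obtain ⟨k2, hk2⟩ := hv2
    obtain ⟨k3, hk3⟩ := hv3
    have hv2' : padicValNat 2 n = 2*a := by omega
    have hv3' : padicValNat 3 n = 2*b := by omega
    have hd2 : (2:ℕ)^(2*a) ∣ n := by rw [← hv2']; exact pow_padicValNat_dvd
    have hd3 : (3:ℕ)^(2*b) ∣ n := by rw [← hv3']; exact pow_padicValNat_dvd
    have hco : Nat.Coprime (2^(2*a)) (3^(2*b)) :=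
      Nat.Coprime.pow _ _ (by norm_num)
    have hd : (4:ℕ)^a*9^b ∣ n := by
      have := Nat.Coprime.mul_dvd_of_dvd_of_dvd hco hd2 hd3
      have h4 : (4:ℕ)^a = 2^(2*a) := by rw [pow_mul]; norm_num
      have h9 : (9:ℕ)^b = 3^(2*b) := by rw [pow_mul]; norm_num
      rw [h4, h9]; exact this
    set d := (4:ℕ)^a*9^b with hdd
    set m := n / d with hmm
    have hn_eq : n = d * m := (Nat.mul_div_cancel' hd).symm
    have hm0 : 0 < m := Nat.div_pos (Nat.le_of_dvd hn0 hd) dpos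
    simp only [Finset.mem_filter, Finset.mem_Icc]
    refine ⟨⟨hm0, Nat.div_le_div_right hnN⟩, ?_⟩
    rw [coprime6_iff']
    constructor
    · intro h2
      have h1 : 1 ≤ padicValNat 2 m := one_le_padicValNat_of_dvd hm0.ne' h2
      have : padicValNat 2 n = padicValNat 2 d + padicValNat 2 m := by
        rw [hn_eq]; exact padicValNat.mul (by positivity) hm0.ne'
      have hvd : padicValNat 2 d = 2*a := by
        have := (val2_form a b 1 (by norm_num) (by norm_num) one_pos).1
        simpa [hdd] using this
      omega
    · intro h3
      have h1 : 1 ≤ padicValNat 3 m := one_le_padicValNat_of_dvd hm0.ne' h3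
      have : padicValNat 3 n = padicValNat 3 d + padicValNat 3 m := by
        rw [hn_eq]; exact padicValNat.mul (by positivity) hm0.ne'
      have hvd : padicValNat 3 d = 2*b := by
        have := (val2_form a b 1 (by norm_num) (by norm_num) one_pos).2
        simpa [hdd] using this
      omega
  · -- backward maps into source
    intro m hm
    simp only [Finset.mem_filter, Finset.mem_Icc] at hm
    obtain ⟨⟨hm1, hmN⟩, hmc⟩ := hm
    rw [coprime6_iff'] at hmc
    have hv := val2_form a b m hmc.1 hmc.2 hm1
    simp only [Finset.mem_filter, Finset.mem_Icc, Prod.mk.injEq]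
    refine ⟨⟨⟨Nat.mul_pos dpos hm1, ?_⟩, ?_⟩, by omega, by omega⟩
    · calc 4^a*9^b*m = m * (4^a*9^b) := by ring
        _ ≤ N := (Nat.le_div_iff_mul_le dpos).mp hmN
    · exact ⟨Nat.mul_pos dpos hm1, ⟨a, by omega⟩, ⟨b, by omega⟩⟩
  · intro n hn
    simp only [Finset.mem_filter, Finset.mem_Icc, Prod.mk.injEq] at hn
    obtain ⟨⟨⟨hn1, hnN⟩, ⟨hn0, hv2, hv3⟩⟩, ha, hb⟩ := hn
    obtain ⟨k2, hk2⟩ := hv2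
    obtain ⟨k3, hk3⟩ := hv3
    have hv2' : padicValNat 2 n = 2*a := by omega
    have hv3' : padicValNat 3 n = 2*b := by omega
    have hd2 : (2:ℕ)^(2*a) ∣ n := by rw [← hv2']; exact pow_padicValNat_dvd
    have hd3 : (3:ℕ)^(2*b) ∣ n := by rw [← hv3']; exact pow_padicValNat_dvd
    have hco : Nat.Coprime (2^(2*a)) (3^(2*b)) := Nat.Coprime.pow _ _ (by norm_num)
    have hd : (4:ℕ)^a*9^b ∣ n := by
      have := Nat.Coprime.mul_dvd_of_dvd_of_dvd hco hd2 hd3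
      have h4 : (4:ℕ)^a = 2^(2*a) := by rw [pow_mul]; norm_num
      have h9 : (9:ℕ)^b = 3^(2*b) := by rw [pow_mul]; norm_num
      rw [h4, h9]; exact this
    exact Nat.mul_div_cancel' hd
  · intro m hm
    exact Nat.mul_div_cancel_left m dpos

open Classical in
lemma Acnt_eq (N : ℕ) :
    Acnt N = ∑ p ∈ (Finset.range (N+1) ×ˢ Finset.range (N+1)),
      Cnt (N / (4^p.1 * 9^p.2)) := by
  rw [Acnt, Finset.card_eq_sum_card_fiberwise
    (f := fun n => (padicValNat 2 n / 2, padicValNat 3 n / 2))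
    (t := Finset.range (N+1) ×ˢ Finset.range (N+1))]
  · exact Finset.sum_congr rfl fun p _ => fiber_card N p
  · intro n hn
    simp only [Finset.coe_filter, Set.mem_setOf_eq, Finset.mem_Icc] at hn
    obtain ⟨⟨hn1, hnN⟩, hn0, _, _⟩ := hn
    simp only [Finset.coe_product, Set.mem_prod, Finset.coe_range, Set.mem_Iio]
    constructor
    · have h1 : 2^(padicValNat 2 n) ≤ n :=
        Nat.le_of_dvd hn0 pow_padicValNat_dvd
      have h2 : padicValNat 2 n < 2^(padicValNat 2 n) := Nat.lt_two_pow_self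
      omega
    · have h1 : 3^(padicValNat 3 n) ≤ n :=
        Nat.le_of_dvd hn0 pow_padicValNat_dvd
      have h2 : padicValNat 3 n < 3^(padicValNat 3 n) :=
        Nat.lt_pow_self (by norm_num)
      omega

lemma support_lem (N : ℕ) (p : ℕ × ℕ)
    (hp : p ∉ (Finset.range (N+1) ×ˢ Finset.range (N+1))) :
    Cnt (N / (4^p.1 * 9^p.2)) = 0 := by
  have hbig : N < 4^p.1 * 9^p.2 := by
    simp only [Finset.mem_product, Finset.mem_range, not_and_or, not_lt] at hp
    have h1 : p.1 < 2^p.1 := Nat.lt_two_pow_self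
    have h2 : p.2 < 2^p.2 := Nat.lt_two_pow_self
    have g1 : (2:ℕ)^p.1 ≤ 4^p.1 := Nat.pow_le_pow_left (by norm_num) _
    have g2 : (2:ℕ)^p.2 ≤ 9^p.2 := Nat.pow_le_pow_left (by norm_num) _
    have e1 : 1 ≤ (4:ℕ)^p.1 := Nat.one_le_pow _ _ (by norm_num)
    have e2 : 1 ≤ (9:ℕ)^p.2 := Nat.one_le_pow _ _ (by norm_num)
    rcases hp with h | h
    · calc N < 4^p.1 := by omega
        _ ≤ 4^p.1 * 9^p.2 := Nat.le_mul_of_pos_right _ (by omega)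
    · calc N < 9^p.2 := by omega
        _ ≤ 4^p.1 * 9^p.2 := Nat.le_mul_of_pos_left _ (by omega)
  rw [Nat.div_eq_of_lt hbig, Cnt_zero]

lemma Acnt_tsum (N : ℕ) :
    ((Acnt N : ℝ)) / N = ∑' p : ℕ × ℕ, (Cnt (N / (4^p.1 * 9^p.2)) : ℝ) / N := by
  rw [tsum_eq_sum (s := Finset.range (N+1) ×ˢ Finset.range (N+1))
    (fun p hp => by rw [support_lem N p hp]; simp)]
  rw [Acnt_eq, ← Finset.sum_div]
  push_cast
  rfl

lemma summable_bound : Summable (fun p : ℕ × ℕ => (2:ℝ) * ((1/4)^p.1 * (1/9)^p.2)) := by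
  apply Summable.mul_left
  exact Summable.mul_of_nonneg (summable_geometric_of_lt_one (by norm_num) (by norm_num))
    (summable_geometric_of_lt_one (by norm_num) (by norm_num))
    (fun x => by positivity) (fun x => by positivity)

lemma bound_ok (N : ℕ) (p : ℕ × ℕ) :
    ‖(Cnt (N / (4^p.1 * 9^p.2)) : ℝ) / N‖ ≤ 2 * ((1/4)^p.1 * (1/9)^p.2) := by
  set d : ℕ := 4^p.1 * 9^p.2 with hd
  have hdpos : 0 < d := by positivity
  have hdr : ((d:ℝ)) = 4^p.1 * 9^p.2 := by push_cast [hd]; ring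
  have hr : 2 * ((1/4:ℝ)^p.1 * (1/9)^p.2) = 2 / d := by
    rw [hdr]; rw [div_pow, div_pow]; ring
  rw [hr]
  rcases le_or_gt d N with h | h
  · have hN0 : 0 < N := lt_of_lt_of_le hdpos h
    have hb := (Cnt_bounds (N / d)).2
    have hxd : ((N / d : ℕ) : ℝ) * d ≤ (N:ℝ) := by
      exact_mod_cast Nat.div_mul_le_self N d
    have hnorm : ‖(Cnt (N / d) : ℝ) / N‖ = (Cnt (N / d) : ℝ) / N := by
      rw [Real.norm_eq_abs, abs_of_nonneg (by positivity)]
    rw [hnorm]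
    rw [div_le_div_iff₀ (by positivity) (by positivity)]
    have hb' : (Cnt (N/d) : ℝ) ≤ ((N/d : ℕ) : ℝ)/3 + 1 := by
      have hc : (6 * Cnt (N/d) : ℝ) ≤ 2 * ((N/d : ℕ) : ℝ) + 6 := by exact_mod_cast hb
      linarith
    have hdN : (d : ℝ) ≤ N := by exact_mod_cast h
    have key : (Cnt (N/d):ℝ) * d ≤ (((N/d:ℕ):ℝ)/3 + 1) * d :=
      mul_le_mul_of_nonneg_right hb' (by positivity)
    have expand : (((N/d:ℕ):ℝ)/3 + 1) * d = ((N/d:ℕ):ℝ) * d / 3 + d := by ring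
    linarith [key, hxd, hdN]
  · rw [Nat.div_eq_of_lt h, Cnt_zero]
    simp
    positivity

lemma pointwise_lim (p : ℕ × ℕ) :
    Tendsto (fun N : ℕ => (Cnt (N / (4^p.1 * 9^p.2)) : ℝ) / N) atTop
      (nhds ((1/3) * ((1/4)^p.1 * (1/9)^p.2))) := by
  set d : ℕ := 4^p.1 * 9^p.2 with hd
  have hdpos : 0 < d := by positivity
  have hdr : ((d:ℝ)) = 4^p.1 * 9^p.2 := by push_cast [hd]; ring
  have hlim : (1/3:ℝ) * ((1/4)^p.1 * (1/9)^p.2) = 1/(3*d) := by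
    rw [hdr, div_pow, div_pow]; ring
  rw [hlim]
  have hlow : Tendsto (fun N : ℕ => 1/(3*(d:ℝ)) - 2/N) atTop (nhds (1/(3*d))) := by
    have := (tendsto_one_div_atTop_nhds_zero_nat).const_mul (2:ℝ)
    have h2 : Tendsto (fun N : ℕ => 2/(N:ℝ)) atTop (nhds 0) := by
      simpa [mul_one_div, div_eq_mul_inv] using this
    simpa using (tendsto_const_nhds (x := 1/(3*(d:ℝ)))).sub h2
  have hhigh : Tendsto (fun N : ℕ => 1/(3*(d:ℝ)) + 2/N) atTop (nhds (1/(3*d))) := by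
    have h2 : Tendsto (fun N : ℕ => 2/(N:ℝ)) atTop (nhds 0) := by
      simpa [mul_one_div, div_eq_mul_inv] using (tendsto_one_div_atTop_nhds_zero_nat).const_mul (2:ℝ)
    simpa using (tendsto_const_nhds (x := 1/(3*(d:ℝ)))).add h2
  apply tendsto_of_tendsto_of_tendsto_of_le_of_le' hlow hhigh
  · filter_upwards [eventually_ge_atTop 1] with N hN
    have hN0 : (0:ℝ) < N := by exact_mod_cast hN
    have hdR : (0:ℝ) < d := by exact_mod_cast hdpos
    have hb := (Cnt_bounds (N / d)).1
    have hb' : 2 * ((N/d:ℕ):ℝ) ≤ 6 * (Cnt (N/d) : ℝ) + 4 := by exact_mod_cast hb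
    have hfloor : (N:ℝ) < ((N/d:ℕ):ℝ) * d + d := by
      have h2 : N < (N/d) * d + d := by
        have := Nat.div_add_mod N d
        have := Nat.mod_lt N hdpos
        have hknat : (N/d)*d = d*(N/d) := Nat.mul_comm _ _
        omega
      exact_mod_cast h2
    rw [sub_le_iff_le_add, div_add_div _ _ (by positivity) hN0.ne',
      div_le_div_iff₀ (by positivity) (by positivity)]
    nlinarith [mul_lt_mul_of_pos_right hfloor hN0,
      mul_le_mul_of_nonneg_right hb' (mul_nonneg hdR.le hN0.le)]
  · filter_upwards [eventually_ge_atTop 1] with N hN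
    have hN0 : (0:ℝ) < N := by exact_mod_cast hN
    have hdR : (0:ℝ) < d := by exact_mod_cast hdpos
    have hb := (Cnt_bounds (N / d)).2
    have hb' : 6 * (Cnt (N/d) : ℝ) ≤ 2 * ((N/d:ℕ):ℝ) + 6 := by exact_mod_cast hb
    have hxd : ((N / d : ℕ) : ℝ) * d ≤ (N:ℝ) := by exact_mod_cast Nat.div_mul_le_self N d
    rw [div_le_iff₀ hN0]
    have expand : (1/(3*(d:ℝ)) + 2/N) * N = N/(3*d) + 2 := by field_simp
    rw [expand]
    have h1 : ((N/d:ℕ):ℝ) / 3 ≤ (N:ℝ)/(3*d) := by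
      rw [div_le_div_iff₀ (by norm_num) (by positivity)]
      nlinarith [hxd, hdR.le]
    linarith [hb', h1]

lemma tsum_limit : ∑' p : ℕ × ℕ, (1/3:ℝ) * ((1/4)^p.1 * (1/9)^p.2) = 1/2 := by
  have hs4 : Summable (fun a : ℕ => ((1/4:ℝ))^a) :=
    summable_geometric_of_lt_one (by norm_num) (by norm_num)
  have hs9 : Summable (fun b : ℕ => ((1/9:ℝ))^b) :=
    summable_geometric_of_lt_one (by norm_num) (by norm_num)
  have hsum : Summable (fun p : ℕ × ℕ => ((1/4:ℝ))^p.1 * (1/9)^p.2) :=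
    Summable.mul_of_nonneg hs4 hs9 (fun x => by positivity) (fun x => by positivity)
  rw [tsum_mul_left, Summable.tsum_prod (hsum)]
  have inner : ∀ a : ℕ, ∑' b : ℕ, ((1/4:ℝ))^a * (1/9)^b = (1/4)^a * (9/8) := by
    intro a
    rw [tsum_mul_left, tsum_geometric_of_lt_one (by norm_num) (by norm_num)]
    norm_num
  simp only [inner]
  rw [tsum_mul_right, tsum_geometric_of_lt_one (by norm_num) (by norm_num)]
  norm_num

lemma Acnt_lim : Tendsto (fun N : ℕ => (Acnt N : ℝ) / N) atTop (nhds (1/2)) := by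
  have h := tendsto_tsum_of_dominated_convergence
    (f := fun (N : ℕ) (p : ℕ × ℕ) => (Cnt (N / (4^p.1 * 9^p.2)) : ℝ) / N)
    (g := fun p : ℕ × ℕ => (1/3:ℝ) * ((1/4)^p.1 * (1/9)^p.2))
    (bound := fun p : ℕ × ℕ => (2:ℝ) * ((1/4)^p.1 * (1/9)^p.2))
    summable_bound pointwise_lim (Filter.Eventually.of_forall (fun N p => bound_ok N p))
  rw [tsum_limit] at h
  have heq : (fun N : ℕ => (Acnt N : ℝ) / N)
      = fun N : ℕ => ∑' p : ℕ × ℕ, (Cnt (N / (4^p.1 * 9^p.2)) : ℝ) / N := by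
    funext N; exact Acnt_tsum N
  rw [heq]
  exact h

open Classical in
lemma ncard_eq_Acnt (N : ℕ) : (M3 ∩ Set.Icc 1 N).ncard = Acnt N := by
  rw [Acnt, ← Set.ncard_coe_finset]
  congr 1
  ext n
  simp only [Set.mem_inter_iff, Set.mem_Icc, Finset.coe_filter, Finset.mem_Icc,
    Set.mem_setOf_eq]
  tauto

lemma image_inter (N : ℕ) :
    ((6 * ·) '' M3 ∩ Set.Icc 1 N) = (6 * ·) '' (M3 ∩ Set.Icc 1 (N/6)) := by
  ext x
  simp only [Set.mem_inter_iff, Set.mem_image, Set.mem_Icc]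
  constructor
  · rintro ⟨⟨m, hm, rfl⟩, h1, h2⟩
    exact ⟨m, ⟨hm, hm.1, (Nat.le_div_iff_mul_le (by norm_num)).mpr (by omega)⟩, rfl⟩
  · rintro ⟨m, ⟨hm, hm1, hm2⟩, rfl⟩
    have := (Nat.le_div_iff_mul_le (show 0 < 6 by norm_num)).mp hm2
    exact ⟨⟨m, hm, rfl⟩, by omega, by omega⟩

lemma six_injective : Function.Injective (fun m : ℕ => 6 * m) :=
  fun a b h => by simpa using h

lemma ncard_image_eq (N : ℕ) :
    ((6 * ·) '' M3 ∩ Set.Icc 1 N).ncard = Acnt (N/6) := by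
  rw [image_inter, Set.ncard_image_of_injective _ six_injective, ncard_eq_Acnt]

lemma div6_tendsto : Tendsto (fun N : ℕ => N / 6) atTop atTop := by
  apply tendsto_atTop_atTop.mpr
  intro b
  exact ⟨6 * b, fun a ha => by omega⟩

lemma ratio_tendsto : Tendsto (fun N : ℕ => ((N/6 : ℕ) : ℝ) / N) atTop (nhds (1/6)) := by
  have hlow : Tendsto (fun N : ℕ => (1/6 : ℝ) - 1/N) atTop (nhds (1/6)) := by
    simpa using (tendsto_const_nhds (x := (1/6:ℝ))).sub tendsto_one_div_atTop_nhds_zero_nat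
  have hhigh : Tendsto (fun N : ℕ => (1/6 : ℝ)) atTop (nhds (1/6)) := tendsto_const_nhds
  apply tendsto_of_tendsto_of_tendsto_of_le_of_le' hlow hhigh
  · filter_upwards [eventually_ge_atTop 1] with N hN
    have hN0 : (0:ℝ) < N := by exact_mod_cast hN
    have hnat : N ≤ (N/6)*6 + 5 := by omega
    have h6' : (N:ℝ) ≤ ((N/6:ℕ):ℝ) * 6 + 5 := by exact_mod_cast hnat
    have h6 : (N:ℝ) - 5 ≤ ((N/6:ℕ):ℝ) * 6 := by linarith
    rw [sub_le_iff_le_add, ← add_div, div_le_div_iff₀ (by norm_num) hN0]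
    linarith [h6]
  · filter_upwards [eventually_ge_atTop 1] with N hN
    have hN0 : (0:ℝ) < N := by exact_mod_cast hN
    have h6 : ((N/6:ℕ):ℝ) * 6 ≤ N := by exact_mod_cast Nat.div_mul_le_self N 6
    rw [div_le_div_iff₀ hN0 (by norm_num)]
    linarith [h6]

lemma image_lim : Tendsto (fun N : ℕ => (Acnt (N/6) : ℝ) / N) atTop (nhds (1/12)) := by
  have h1 : Tendsto (fun N : ℕ => (Acnt (N/6) : ℝ) / ((N/6 : ℕ):ℝ)) atTop (nhds (1/2)) :=
    Acnt_lim.comp div6_tendsto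
  have h2 := h1.mul ratio_tendsto
  have heq : ∀ᶠ N : ℕ in atTop,
      (Acnt (N/6) : ℝ) / ((N/6 : ℕ):ℝ) * (((N/6 : ℕ):ℝ) / N)
        = (Acnt (N/6) : ℝ) / N := by
    filter_upwards [eventually_ge_atTop 6] with N hN
    have hk : ((N/6 : ℕ):ℝ) ≠ 0 := Nat.cast_ne_zero.mpr (by omega)
    field_simp
  have := (Filter.Tendsto.congr' heq h2)
  convert this using 2
  norm_num

lemma disj_M3 : Disjoint M3 ((6 * ·) '' M3) := by
  rw [Set.disjoint_left]
  rintro n ⟨hn0, hv2, _⟩ ⟨m, hm, rfl⟩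
  have hm0 : m ≠ 0 := hm.1.ne'
  have : padicValNat 2 (6 * m) = padicValNat 2 6 + padicValNat 2 m :=
    padicValNat.mul (by norm_num) hm0
  have h6 : padicValNat 2 6 = 1 := by
    have : (6:ℕ) = 2 * 3 := by norm_num
    rw [this, padicValNat.mul (by norm_num) (by norm_num),
      padicValNat.self (by norm_num), padicValNat.eq_zero_of_not_dvd (by norm_num)]
  obtain ⟨k, hk⟩ := hv2
  obtain ⟨j, hj⟩ := hm.2.1
  have hk' : padicValNat 2 (6*m) = k + k := hk
  omega

end Aux

/-- `M` has natural density `1/2`, `6M` has natural density `1/12`, and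
`M ∪ 6M` has natural density `7/12`. -/
theorem M3_densities :
    hasDensity M3 (1 / 2) ∧ hasDensity ((6 * ·) '' M3) (1 / 12) ∧
    hasDensity (M3 ∪ (6 * ·) '' M3) (7 / 12) := by
  have hd1 : hasDensity M3 (1 / 2) := by
    unfold hasDensity
    simpa only [ncard_eq_Acnt] using Acnt_lim
  have hd2 : hasDensity ((6 * ·) '' M3) (1 / 12) := by
    unfold hasDensity
    simpa only [ncard_image_eq] using image_lim
  refine ⟨hd1, hd2, ?_⟩
  unfold hasDensity
  have hsplit : ∀ N : ℕ, ((M3 ∪ (6 * ·) '' M3) ∩ Set.Icc 1 N).ncard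
      = (M3 ∩ Set.Icc 1 N).ncard + ((6 * ·) '' M3 ∩ Set.Icc 1 N).ncard := by
    intro N
    rw [Set.union_inter_distrib_right]
    apply Set.ncard_union_eq
    · exact (disj_M3.mono Set.inter_subset_left Set.inter_subset_left)
    · exact (Set.finite_Icc 1 N).inter_of_right _
    · exact (Set.finite_Icc 1 N).inter_of_right _
  have : Tendsto (fun N : ℕ =>
      ((M3 ∩ Set.Icc 1 N).ncard : ℝ)/N + (((6 * ·) '' M3 ∩ Set.Icc 1 N).ncard : ℝ)/N)
      atTop (nhds (1/2 + 1/12)) := hd1.add hd2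
  have heq : (fun N : ℕ => (((M3 ∪ (6 * ·) '' M3) ∩ Set.Icc 1 N).ncard : ℝ) / N)
      = fun N : ℕ =>
      ((M3 ∩ Set.Icc 1 N).ncard : ℝ)/N + (((6 * ·) '' M3 ∩ Set.Icc 1 N).ncard : ℝ)/N := by
    funext N
    rw [hsplit N]
    push_cast
    ring
  rw [heq]
  convert this using 2
  norm_num
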